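/- For every integer n ≥ 3, the spectral radius of the super compacted matrix SC_n is the unique real root larger than 1 of the polynomial Q_n(x) = x^n − 2(n−1)·Σ_{j=1}^{n−1} x^j + 1; in particular ρ(SC_n) > 1 and Q_n(ρ(SC_n)) = 0. -/

import Mathlib

/-- The spectral radius of a square real matrix: the maximum (supremum) of the
moduli of its complex eigenvalues. -/
noncomputable def specRad {m : Type*} [Fintype m] [DecidableEq m]
    (M : Matrix m m ℝ) : ℝ :=
  sSup {x : ℝ | ∃ z ∈ spectrum ℂ (M.map (algebraMap ℝ ℂ)), ‖z‖ = x}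

/-- Entry `(i+1, j+1)` of the super compacted matrix `SC_n` of rank `n`
(zero-indexed `i, j ∈ {0, …, n-1}`). -/
def SCfun (n i j : ℕ) : ℝ :=
  if i + 3 ≤ n ∧ j = i + 1 then 1
  else if i = n - 1 then 1
  else if i = n - 3 ∧ j = n - 1 then 2
  else if i = n - 2 ∧ j + 2 ≤ n then 2 * (n : ℝ) - 3
  else if i = n - 2 ∧ j = n - 1 then 2 * (n : ℝ) - 4
  else 0

/-- The super compacted matrix `SC_n` of rank `n`, of size `n × n`. -/
def SCmat (n : ℕ) : Matrix (Fin n) (Fin n) ℝ :=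
  Matrix.of fun i j => SCfun n i.val j.val

open Polynomial in
/-- The polynomial `Q_n(x) = x^n − 2(n−1)·Σ_{j=1}^{n−1} x^j + 1`. -/
noncomputable def Qpoly (n : ℕ) : Polynomial ℝ :=
  X ^ n - C (2 * ((n : ℝ) - 1)) * (∑ j ∈ Finset.Icc 1 (n - 1), X ^ j) + 1

/-! If `Q_n(r) = 0`, the vector `w` with `w_i = r^(n-2) + r^(n-3) + ⋯ + r^(n-2-i)` for `i < n - 1`
and `w_(n-1) = r^(n-1) - (2n-3)(1 + r + ⋯ + r^(n-2))` is a left eigenvector of `SC_n` for `r`;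
it is entrywise positive once `r ≥ 2n - 2`. For a nonnegative matrix, a positive left
eigenvector pins its eigenvalue down as the spectral radius: pairing `‖z‖ |v| ≤ A |v|` (entrywise,
for an eigenvector `v` of `z`) with `w` gives `‖z‖ ≤ r`. Since `Q_n < 0` on `[1, 2n-2]`, every root
`r > 1` of `Q_n` exceeds `2n - 2`, hence equals `ρ(SC_n)`; this gives uniqueness, and the
intermediate value theorem on `[1, 2n-1]` gives existence. -/

open Matrix Polynomial Finset

namespace Matrix

variable {ι : Type*} [Fintype ι] [DecidableEq ι]

theorem exists_mulVec_eq_smul_of_mem_spectrum {K : Type*} [Field K] {M : Matrix ι ι K} {z : K}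
    (hz : z ∈ spectrum K M) : ∃ v ≠ 0, M *ᵥ v = z • v := by
  rw [← spectrum_toLin', ← Module.End.hasEigenvalue_iff_mem_spectrum] at hz
  obtain ⟨v, hv⟩ := hz.exists_hasEigenvector
  exact ⟨v, hv.2, by simpa using hv.apply_eq_smul⟩

theorem ofReal_mem_spectrum_map_of_vecMul_eq_smul {A : Matrix ι ι ℝ} {w : ι → ℝ} {r : ℝ}
    (hw : w ≠ 0) (h : w ᵥ* A = r • w) : (r : ℂ) ∈ spectrum ℂ (A.map (algebraMap ℝ ℂ)) := by
  have hdet : (scalar ι r - A).det = 0 :=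
    exists_vecMul_eq_zero_iff.mp ⟨w, hw, by simp [vecMul_sub, h]⟩
  rw [mem_spectrum_iff_isRoot_charpoly, charpoly_map, IsRoot, eval_map_algebraMap,
    ← Complex.coe_algebraMap, aeval_algebraMap_apply, coe_aeval_eq_eval, eval_charpoly, hdet,
    map_zero]

theorem norm_le_of_mem_spectrum_map_of_vecMul_eq_smul {A : Matrix ι ι ℝ}
    (hA : ∀ i j, 0 ≤ A i j) {w : ι → ℝ} (hw : ∀ i, 0 < w i) {r : ℝ} (h : w ᵥ* A = r • w)
    {z : ℂ} (hz : z ∈ spectrum ℂ (A.map (algebraMap ℝ ℂ))) : ‖z‖ ≤ r := by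
  obtain ⟨v, hv0, hv⟩ := exists_mulVec_eq_smul_of_mem_spectrum hz
  set c : ι → ℝ := fun i => ‖v i‖
  have hrow : ‖z‖ • c ≤ A *ᵥ c := by
    intro i
    calc ‖z‖ * ‖v i‖ = ‖∑ j, (A i j : ℂ) * v j‖ := by
          rw [← norm_mul, ← smul_eq_mul, ← Pi.smul_apply, ← hv]; rfl
      _ ≤ ∑ j, ‖(A i j : ℂ) * v j‖ := norm_sum_le _ _
      _ = (A *ᵥ c) i := by simp [c, mulVec, dotProduct, abs_of_nonneg (hA i _)]
  have hpos : 0 < w ⬝ᵥ c := by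
    obtain ⟨i, hi⟩ := Function.ne_iff.mp hv0
    exact sum_pos' (fun j _ => mul_nonneg (hw j).le (norm_nonneg _))
      ⟨i, mem_univ _, mul_pos (hw i) (norm_pos_iff.mpr hi)⟩
  refine le_of_mul_le_mul_right ?_ hpos
  calc ‖z‖ * (w ⬝ᵥ c) = w ⬝ᵥ (‖z‖ • c) := by rw [dotProduct_smul, smul_eq_mul]
    _ ≤ w ⬝ᵥ (A *ᵥ c) := dotProduct_le_dotProduct_of_nonneg_left hrow fun i => (hw i).le
    _ = r * (w ⬝ᵥ c) := by rw [dotProduct_mulVec, h, smul_dotProduct, smul_eq_mul]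

end Matrix

theorem specRad_eq_of_vecMul_eq_smul {ι : Type*} [Fintype ι] [DecidableEq ι] [Nonempty ι]
    {A : Matrix ι ι ℝ} (hA : ∀ i j, 0 ≤ A i j) {w : ι → ℝ} (hw : ∀ i, 0 < w i) {r : ℝ}
    (h : w ᵥ* A = r • w) : specRad A = r := by
  obtain ⟨i⟩ := ‹Nonempty ι›
  have hmem := ofReal_mem_spectrum_map_of_vecMul_eq_smul (fun h0 => (hw i).ne' (congrFun h0 i)) h
  have hnorm : ‖(r : ℂ)‖ = r :=
    le_antisymm (norm_le_of_mem_spectrum_map_of_vecMul_eq_smul hA hw h hmem)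
      (by simpa using le_abs_self r)
  refine IsGreatest.csSup_eq ⟨⟨r, hmem, hnorm⟩, ?_⟩
  rintro _ ⟨z, hz, rfl⟩
  exact norm_le_of_mem_spectrum_map_of_vecMul_eq_smul hA hw h hz

theorem Qpoly_eval (n : ℕ) (x : ℝ) :
    (Qpoly n).eval x = x ^ n - 2 * ((n : ℝ) - 1) * (x * ∑ k ∈ range (n - 1), x ^ k) + 1 := by
  have hsum : ∑ j ∈ Icc 1 (n - 1), x ^ j = x * ∑ k ∈ range (n - 1), x ^ k := by
    rw [← Ico_add_one_right_eq_Icc, sum_Ico_eq_sum_range, mul_sum]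
    simp [pow_succ', add_comm 1]
  simp [Qpoly, eval_finsetSum, hsum]

theorem Qpoly_eval_two_mul_sub_one {n : ℕ} (hn : 1 ≤ n) :
    (Qpoly n).eval (2 * (n : ℝ) - 1) = 2 * n := by
  obtain ⟨m, rfl⟩ : ∃ m, n = m + 1 := ⟨n - 1, by omega⟩
  have hgeom := geom_sum_mul (2 * ((m + 1 : ℕ) : ℝ) - 1) m
  rw [Qpoly_eval, Nat.add_sub_cancel, pow_succ]
  push_cast at hgeom ⊢
  linear_combination (-(2 * (m : ℝ) + 1)) * hgeom

theorem Qpoly_eval_neg {n : ℕ} (hn : 3 ≤ n) {x : ℝ} (hx₁ : 1 ≤ x) (hx₂ : x ≤ 2 * n - 2) :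
    (Qpoly n).eval x < 0 := by
  obtain ⟨m, rfl⟩ : ∃ m, n = m + 3 := ⟨n - 3, by omega⟩
  have hsum : 1 ≤ x * ∑ k ∈ range (m + 1), x ^ k := by
    refine one_le_mul_of_one_le_of_one_le hx₁ ?_
    rw [sum_range_succ']
    simpa using sum_nonneg fun k (_ : k ∈ range m) => pow_nonneg (zero_le_one.trans hx₁) (k + 1)
  have hpow : x ^ (m + 3) ≤ (2 * (m + 3) - 2) * x ^ (m + 2) := by
    rw [pow_succ, mul_comm]; push_cast at hx₂; gcongr
  rw [Qpoly_eval, show m + 3 - 1 = m + 1 + 1 by omega, sum_range_succ, mul_add, ← pow_succ']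
  push_cast
  nlinarith

theorem exists_Qpoly_root {n : ℕ} (hn : 3 ≤ n) : ∃ r : ℝ, 1 < r ∧ (Qpoly n).eval r = 0 := by
  have hn' : (3 : ℝ) ≤ n := by exact_mod_cast hn
  obtain ⟨r, ⟨hr₁, -⟩, hr⟩ := intermediate_value_Ioo (by linarith : (1 : ℝ) ≤ 2 * n - 1)
    (Qpoly n).continuous.continuousOn
    ⟨Qpoly_eval_neg hn le_rfl (by linarith),
      by rw [Qpoly_eval_two_mul_sub_one (by omega)]; positivity⟩
  exact ⟨r, hr₁, hr⟩

theorem two_mul_sub_two_lt_of_Qpoly_eval_eq_zero {n : ℕ} (hn : 3 ≤ n) {x : ℝ} (hx : 1 < x)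
    (hQ : (Qpoly n).eval x = 0) : 2 * (n : ℝ) - 2 < x := by
  by_contra! h
  exact (Qpoly_eval_neg hn hx.le h).ne hQ

section SCfun

variable {n : ℕ}

theorem SCfun_nonneg (i j : ℕ) : 0 ≤ SCfun n i j := by
  unfold SCfun
  split_ifs <;> norm_num
  all_goals
    have : (2 : ℝ) ≤ n := by exact_mod_cast (show 2 ≤ n by omega)
    linarith

theorem SCfun_zero (hn : 2 ≤ n) {i : ℕ} (hi : i < n) :
    SCfun n i 0 = (if i = n - 2 then 2 * (n : ℝ) - 3 else 0) + if i = n - 1 then 1 else 0 := by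
  unfold SCfun; split_ifs <;> first | omega | ring1 | simp_all

theorem SCfun_succ {i j : ℕ} (hj : j + 3 ≤ n) (hi : i < n) :
    SCfun n i (j + 1) = (if i = j then 1 else 0) + (if i = n - 2 then 2 * (n : ℝ) - 3 else 0) +
      if i = n - 1 then 1 else 0 := by
  unfold SCfun; split_ifs <;> first | omega | ring1

theorem SCfun_last (hn : 3 ≤ n) {i : ℕ} (hi : i < n) :
    SCfun n i (n - 1) = (if i = n - 3 then 2 else 0) + (if i = n - 2 then 2 * (n : ℝ) - 4 else 0) +
      if i = n - 1 then 1 else 0 := by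
  unfold SCfun; split_ifs <;> first | omega | ring1

theorem vecMul_SCmat_apply (v : ℕ → ℝ) (j : Fin n) :
    ((fun i : Fin n => v i) ᵥ* SCmat n) j = ∑ i ∈ range n, v i * SCfun n i j :=
  Fin.sum_univ_eq_sum_range (fun i => v i * SCfun n i j) n

theorem sum_mul_SCfun_zero (hn : 2 ≤ n) (v : ℕ → ℝ) :
    ∑ i ∈ range n, v i * SCfun n i 0 = (2 * n - 3) * v (n - 2) + v (n - 1) := by
  rw [sum_congr rfl fun i hi => by rw [SCfun_zero hn (mem_range.mp hi)]]
  simp only [mul_add, mul_ite, mul_zero, sum_add_distrib, sum_ite_eq', mem_range,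
    if_pos (show n - 2 < n by omega), if_pos (show n - 1 < n by omega)]
  ring

theorem sum_mul_SCfun_succ {j : ℕ} (hj : j + 3 ≤ n) (v : ℕ → ℝ) :
    ∑ i ∈ range n, v i * SCfun n i (j + 1) = v j + (2 * n - 3) * v (n - 2) + v (n - 1) := by
  rw [sum_congr rfl fun i hi => by rw [SCfun_succ hj (mem_range.mp hi)]]
  simp only [mul_add, mul_ite, mul_zero, sum_add_distrib, sum_ite_eq', mem_range,
    if_pos (show j < n by omega), if_pos (show n - 2 < n by omega),
    if_pos (show n - 1 < n by omega)]
  ring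

theorem sum_mul_SCfun_last (hn : 3 ≤ n) (v : ℕ → ℝ) :
    ∑ i ∈ range n, v i * SCfun n i (n - 1) =
      2 * v (n - 3) + (2 * n - 4) * v (n - 2) + v (n - 1) := by
  rw [sum_congr rfl fun i hi => by rw [SCfun_last hn (mem_range.mp hi)]]
  simp only [mul_add, mul_ite, mul_zero, sum_add_distrib, sum_ite_eq', mem_range,
    if_pos (show n - 3 < n by omega), if_pos (show n - 2 < n by omega),
    if_pos (show n - 1 < n by omega)]
  ring

end SCfun

def scEigvec (n : ℕ) (r : ℝ) (i : ℕ) : ℝ :=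
  if i = n - 1 then r ^ (n - 1) - (2 * n - 3) * ∑ k ∈ range (n - 1), r ^ k
  else ∑ k ∈ range (i + 1), r ^ (n - 2 - k)

section scEigvec

variable {n : ℕ} {r : ℝ}

theorem scEigvec_of_lt {i : ℕ} (hi : i + 1 < n) :
    scEigvec n r i = ∑ k ∈ range (i + 1), r ^ (n - 2 - k) :=
  if_neg (by omega)

theorem scEigvec_sub_two (hn : 2 ≤ n) : scEigvec n r (n - 2) = ∑ k ∈ range (n - 1), r ^ k := by
  rw [scEigvec_of_lt (by omega), show n - 2 + 1 = n - 1 by omega,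
    ← sum_range_reflect (r ^ ·) (n - 1)]
  rfl

theorem two_mul_sub_three_mul_scEigvec_add (hn : 2 ≤ n) :
    (2 * n - 3) * scEigvec n r (n - 2) + scEigvec n r (n - 1) = r ^ (n - 1) := by
  rw [scEigvec_sub_two hn, scEigvec, if_pos rfl]
  ring

theorem mul_scEigvec_zero (hn : 2 ≤ n) : r * scEigvec n r 0 = r ^ (n - 1) := by
  rw [scEigvec_of_lt (by omega), sum_range_one, ← pow_succ']
  congr 1; omega

theorem mul_scEigvec_succ {j : ℕ} (hj : j + 2 < n) :
    r * scEigvec n r (j + 1) = scEigvec n r j + r ^ (n - 1) := by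
  rw [scEigvec_of_lt hj, scEigvec_of_lt (by omega), sum_range_succ', mul_add, mul_sum,
    ← pow_succ', show n - 2 - 0 + 1 = n - 1 by omega]
  congr 1
  exact sum_congr rfl fun k hk => by
    have := mem_range.mp hk
    rw [← pow_succ']; congr 1; omega

theorem mul_scEigvec_last (hn : 3 ≤ n) (hr : (Qpoly n).eval r = 0) :
    r * scEigvec n r (n - 1) =
      2 * scEigvec n r (n - 3) + (2 * n - 4) * scEigvec n r (n - 2) + scEigvec n r (n - 1) := by
  have hG := geom_sum_mul r (n - 1)
  have h₃ : scEigvec n r (n - 2) = scEigvec n r (n - 3) + 1 := by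
    rw [scEigvec_of_lt (by omega), scEigvec_of_lt (by omega),
      show n - 2 + 1 = n - 3 + 1 + 1 by omega, sum_range_succ _ (n - 3 + 1),
      show n - 2 - (n - 3 + 1) = 0 by omega, pow_zero]
  have hlast : scEigvec n r (n - 1) = r ^ (n - 1) - (2 * n - 3) * scEigvec n r (n - 2) := by
    rw [scEigvec_sub_two (by omega), scEigvec, if_pos rfl]
  have hpow : r ^ n = r * r ^ (n - 1) := by rw [← pow_succ']; congr 1; omega
  rw [Qpoly_eval, ← scEigvec_sub_two (by omega)] at hr
  rw [← scEigvec_sub_two (by omega)] at hG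
  linear_combination (r - 1) * hlast + 2 * h₃ - hpow + hr + hG

theorem scEigvec_pos (hr : 2 * (n : ℝ) - 2 ≤ r) {i : ℕ} (hi : i < n) : 0 < scEigvec n r i := by
  rcases eq_or_ne i (n - 1) with rfl | hin
  · have hr₀ : 0 ≤ r := by
      have : (1 : ℝ) ≤ n := by exact_mod_cast (show 1 ≤ n by omega)
      linarith
    have hG := geom_sum_mul r (n - 1)
    have hG₀ : 0 ≤ ∑ k ∈ range (n - 1), r ^ k := sum_nonneg fun k _ => pow_nonneg hr₀ k
    rw [scEigvec, if_pos rfl]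
    nlinarith
  · have : (2 : ℝ) ≤ n := by exact_mod_cast (show 2 ≤ n by omega)
    rw [scEigvec_of_lt (by omega)]
    exact sum_pos (fun k _ => pow_pos (by linarith) _) nonempty_range_add_one

theorem vecMul_SCmat_scEigvec (hn : 3 ≤ n) (hr : (Qpoly n).eval r = 0) :
    (fun i : Fin n => scEigvec n r i) ᵥ* SCmat n = r • fun i : Fin n => scEigvec n r i := by
  ext ⟨j, hj⟩
  rw [vecMul_SCmat_apply, Pi.smul_apply, smul_eq_mul]
  rcases j with _ | j
  · rw [sum_mul_SCfun_zero (by omega), two_mul_sub_three_mul_scEigvec_add (by omega),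
      mul_scEigvec_zero (by omega)]
  rcases Nat.lt_or_ge (j + 2) n with hj₂ | hj₂
  · rw [sum_mul_SCfun_succ hj₂, add_assoc, two_mul_sub_three_mul_scEigvec_add (by omega),
      mul_scEigvec_succ hj₂]
  · rw [show ((⟨j + 1, hj⟩ : Fin n) : ℕ) = n - 1 by simp only; omega, sum_mul_SCfun_last hn,
      mul_scEigvec_last hn hr]

end scEigvec

theorem stmt11 (n : ℕ) (hn : 3 ≤ n) :
    1 < specRad (SCmat n) ∧ (Qpoly n).eval (specRad (SCmat n)) = 0 ∧
      ∀ x : ℝ, 1 < x → (Qpoly n).eval x = 0 → x = specRad (SCmat n) := by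
  have : Nonempty (Fin n) := ⟨⟨0, by omega⟩⟩
  have key : ∀ x : ℝ, 1 < x → (Qpoly n).eval x = 0 → specRad (SCmat n) = x := fun x hx hQ =>
    specRad_eq_of_vecMul_eq_smul (fun i j : Fin n => SCfun_nonneg i j)
      (fun i : Fin n => scEigvec_pos (two_mul_sub_two_lt_of_Qpoly_eval_eq_zero hn hx hQ).le i.isLt)
      (vecMul_SCmat_scEigvec hn hQ)
  obtain ⟨r, hr₁, hr⟩ := exists_Qpoly_root hn
  rw [key r hr₁ hr]
  exact ⟨hr₁, hr, fun x hx hQ => (key x hx hQ).symm.trans (key r hr₁ hr)⟩
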